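/- Let η : ℝ → [0,1] be a smooth compactly supported function with |η̂(z)| ≤ C(1+|z|)^{−100}. With the notation of the previous context (η_Q built from bumps at Farey fractions a/q with prime q ∈ [Q,2Q]), there is for every ε > 0 a constant C_ε such that for all integers l ≠ 0, |𝔉(1 − η_Q)(l)| ≤ C_ε Q^{ε−1}. -/

import Mathlib

open MeasureTheory

noncomputable def e (z : ℝ) : ℂ := Complex.exp (2 * Real.pi * Complex.I * z)

lemma e_add (x y : ℝ) : e (x + y) = e x * e y := by
  simp only [e, ← Complex.exp_add]
  congr 1
  push_cast
  ring

lemma e_int (n : ℤ) : e n = 1 := by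
  simp only [e]
  rw [show (2 * (Real.pi:ℂ) * Complex.I * ((n:ℝ):ℂ)) = (n:ℂ) * (2 * Real.pi * Complex.I) by
    push_cast; ring]
  exact Complex.exp_int_mul_two_pi_mul_I n

lemma gauss_sum (q : ℕ) (hq : 2 ≤ q) (l : ℤ) :
    ∑ a ∈ Finset.Icc 1 (q - 1), e (-(l:ℝ) * ((a:ℝ) / q)) =
      if (q:ℤ) ∣ l then ((q:ℂ) - 1) else -1 := by
  have hq0 : (q:ℝ) ≠ 0 := by positivity
  have hζ : ∀ a : ℕ, e (-(l:ℝ) * ((a:ℝ) / q)) = (e (-(l:ℝ) / q)) ^ a := by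
    intro a
    simp only [e, ← Complex.exp_nat_mul]
    congr 1
    push_cast
    field_simp
  have hIcc : Finset.Icc 1 (q - 1) = Finset.Ico 1 q := by
    rw [← Finset.Ico_add_one_right_eq_Icc]
    congr 1
    omega
  by_cases hd : (q:ℤ) ∣ l
  · obtain ⟨m, hm⟩ := hd
    have hone : e (-(l:ℝ) / q) = 1 := by
      have h1 : -(l:ℝ) / q = ((-m : ℤ) : ℝ) := by
        rw [hm]; push_cast; field_simp
      rw [h1, e_int]
    rw [if_pos ⟨m, hm⟩]
    simp only [hζ, hone, one_pow, Finset.sum_const, hIcc, Nat.card_Ico, smul_eq_mul, mul_one]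
    rw [nsmul_eq_mul, mul_one, Nat.cast_sub (by omega : 1 ≤ q)]
    push_cast
    ring
  · have hζq : (e (-(l:ℝ) / q)) ^ q = 1 := by
      rw [← hζ q, div_self hq0, mul_one]
      rw [show -(l:ℝ) = ((-l : ℤ) : ℝ) by push_cast; ring, e_int]
    have hζ1 : e (-(l:ℝ) / q) ≠ 1 := by
      intro h
      apply hd
      obtain ⟨n, hn⟩ := Complex.exp_eq_one_iff.mp h
      have hne : (2 * (Real.pi:ℂ) * Complex.I) ≠ 0 := by
        simp [Real.pi_ne_zero, Complex.I_ne_zero]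
      have h2 : ((-(l:ℝ) / q : ℝ) : ℂ) = (n : ℂ) := by
        apply mul_left_cancel₀ hne
        rw [hn]; ring
      have h3 : -(l:ℝ) / q = (n:ℝ) := by exact_mod_cast h2
      have h4 : -(l:ℝ) = (n:ℝ) * q := by
        field_simp at h3; linarith
      have h5 : l = -n * q := by exact_mod_cast (by push_cast; linarith : (l:ℝ) = ((-n * q : ℤ) : ℝ))
      exact ⟨-n, by rw [h5]; ring⟩
    rw [if_neg hd]
    simp only [hζ, hIcc]
    have h0 : ∑ a ∈ Finset.Ico 0 q, (e (-(l:ℝ) / q)) ^ a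
        = (e (-(l:ℝ)/q))^0 + ∑ a ∈ Finset.Ico 1 q, (e (-(l:ℝ) / q)) ^ a :=
      Finset.sum_eq_sum_Ico_succ_bot (by omega) _
    have hgeom : ∑ a ∈ Finset.range q, (e (-(l:ℝ) / q)) ^ a = 0 := by
      rw [geom_sum_eq hζ1, hζq]
      simp
    rw [Finset.range_eq_Ico] at hgeom
    rw [h0] at hgeom
    simp only [pow_zero] at hgeom
    linear_combination hgeom

lemma bump_integral (η : ℝ → ℝ)
    (hsupp : ∀ y : ℝ, y ∉ Set.Icc (-1 : ℝ) 1 → η y = 0)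
    (M : ℝ) (hM : 0 < M) (s : ℝ) (hs1 : 1 / M < s) (hs2 : s + 1 / M ≤ 1) (l : ℤ) :
    ∫ t in (0:ℝ)..1, (η ((t - s) * M) : ℂ) * e (-(l:ℝ) * t) =
      ((M⁻¹ : ℝ) : ℂ) * (e (-(l:ℝ) * s) * ∫ y : ℝ, (η y : ℂ) * e (-((l:ℝ) / M) * y)) := by
  have hM0 : M ≠ 0 := ne_of_gt hM
  have hsub : Function.support (fun t : ℝ => (η ((t - s) * M) : ℂ) * e (-(l:ℝ) * t))
      ⊆ Set.Ioc 0 1 := by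
    intro t ht
    simp only [Function.mem_support] at ht
    by_contra hmem
    apply ht
    have hz : η ((t - s) * M) = 0 := by
      apply hsupp
      intro hc
      rcases Set.mem_Icc.mp hc with ⟨h1, h2⟩
      have himp : 0 < t → 1 < t := by simpa [Set.mem_Ioc] using hmem
      rcases le_or_gt t 0 with h | h
      · nlinarith [mul_lt_mul_of_pos_right hs1 hM, one_div_mul_cancel hM0,
          mul_le_mul_of_nonneg_right h hM.le]
      · nlinarith [mul_le_mul_of_nonneg_right hs2 hM.le, one_div_mul_cancel hM0,
          mul_lt_mul_of_pos_right (himp h) hM]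
    rw [hz]
    simp
  rw [intervalIntegral.integral_eq_integral_of_support_subset hsub]
  have step1 : (∫ t : ℝ, (η ((t - s) * M) : ℂ) * e (-(l:ℝ) * t))
      = ∫ u : ℝ, (η (u * M) : ℂ) * e (-(l:ℝ) * (u + s)) := by
    rw [← integral_add_right_eq_self (fun u : ℝ => (η (u * M) : ℂ) * e (-(l:ℝ) * (u + s))) (-s)]
    congr 1
    funext t
    rw [show t + -s + s = t by ring, show t + -s = t - s by ring]
  rw [step1]
  have step2 : (∫ u : ℝ, (η (u * M) : ℂ) * e (-(l:ℝ) * (u + s)))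
      = ∫ u : ℝ, (fun y : ℝ => e (-(l:ℝ) * s) * ((η y : ℂ) * e (-((l:ℝ) / M) * y))) (u * M) := by
    congr 1
    funext u
    simp only
    rw [show -((l:ℝ) / M) * (u * M) = -(l:ℝ) * u by field_simp]
    rw [show -(l:ℝ) * (u + s) = -(l:ℝ) * s + -(l:ℝ) * u by ring, e_add]
    ring
  rw [step2, MeasureTheory.Measure.integral_comp_mul_right
    (fun y : ℝ => e (-(l:ℝ) * s) * ((η y : ℂ) * e (-((l:ℝ) / M) * y))) M]
  rw [MeasureTheory.integral_const_mul]
  rw [abs_of_pos (inv_pos.mpr hM)]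
  rw [Complex.real_smul]

set_option maxHeartbeats 1000000 in
/-- Decay of the Fourier coefficients of `1 − η_Q`: with `η_Q` the normalized
sum of bumps `η((t−a/q)10Q²)` at Farey fractions with prime denominators
`q ∈ [Q, 2Q]`, for every `ε > 0` there is `C_ε` with
`|𝔉(1 − η_Q)(l)| ≤ C_ε Q^{ε−1}` for all `l ≠ 0`. -/
theorem fourier_coeff_etaQ_decay (ε : ℝ) (hε : 0 < ε) (C₀ : ℝ) (hC₀ : 0 < C₀) :
    ∃ C : ℝ, 0 < C ∧
      ∀ (Q : ℕ), 2 ≤ Q →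
      ∀ (η : ℝ → ℝ), Continuous η →
      (∀ y, 0 ≤ η y) → (∀ y, η y ≤ 1) →
      (∀ y : ℝ, y ∉ Set.Icc (-1 : ℝ) 1 → η y = 0) →
      (∫ y : ℝ, η y) = 1 →
      (∀ z : ℝ, ‖∫ y : ℝ, (η y : ℂ) * e (-z * y)‖ ≤ C₀ * (1 + |z|) ^ (-(100 : ℝ))) →
      ∀ (A_Q : Finset ℕ), (∀ q ∈ A_Q, q.Prime ∧ Q ≤ q ∧ q ≤ 2 * Q) →
      (Q : ℝ) / (2 * Real.log Q) ≤ A_Q.card →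
      ∀ (N_Q : ℕ), N_Q = ∑ q ∈ A_Q, (q - 1) →
      ∀ (c_Q : ℝ), c_Q = 10 * (Q : ℝ) ^ 2 / N_Q →
      ∀ (η_Q : ℝ → ℝ), (∀ t : ℝ, η_Q t =
        c_Q * ∑ q ∈ A_Q, ∑ a ∈ Finset.Icc 1 (q - 1), η ((t - (a : ℝ) / q) * (10 * Q ^ 2))) →
      ∀ l : ℤ, l ≠ 0 →
        ‖∫ t in (0:ℝ)..1, ((1 : ℂ) - η_Q t) * e (-(l : ℝ) * t)‖ ≤
          C * (Q : ℝ) ^ (ε - 1) := by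
  refine ⟨24 * C₀ / ε + 2 * C₀ * (10:ℝ) ^ (100:ℝ), by positivity, ?_⟩
  intro Q hQ η hηc hη0 hη1 hηsupp hηint hηhat A_Q hA hcard N_Q hN c_Q hc η_Q hetaQ l hl
  have hfun : η_Q = fun t => c_Q * ∑ q ∈ A_Q, ∑ a ∈ Finset.Icc 1 (q - 1),
      η ((t - (a : ℝ) / q) * (10 * (Q:ℝ) ^ 2)) := funext hetaQ
  subst hfun
  -- basic positivity facts
  have hQ2 : (2:ℝ) ≤ (Q:ℝ) := by exact_mod_cast hQ
  have hQ0 : (0:ℝ) < Q := by linarith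
  have hQ1 : (1:ℝ) ≤ Q := by linarith
  have hlog : 0 < Real.log Q := Real.log_pos (by linarith)
  have hM : (0:ℝ) < 10 * (Q:ℝ) ^ 2 := by positivity
  have hM0 : (10 * (Q:ℝ) ^ 2) ≠ 0 := ne_of_gt hM
  have hcard0 : 0 < A_Q.card := by
    rcases Nat.eq_zero_or_pos A_Q.card with h | h
    · exfalso
      rw [h] at hcard
      have : (0:ℝ) < (Q:ℝ) / (2 * Real.log Q) := by positivity
      simp at hcard
      linarith
    · exact h
  have hq2 : ∀ q ∈ A_Q, 2 ≤ q := fun q hq => le_trans hQ (hA q hq).2.1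
  have hNpos : 0 < N_Q := by
    rw [hN]
    apply Finset.sum_pos
    · intro q hq
      have := hq2 q hq
      omega
    · exact Finset.card_pos.mp hcard0
  have hNR : (0:ℝ) < (N_Q:ℝ) := by exact_mod_cast hNpos
  -- continuity of e
  have he_cont : Continuous e := by
    have : Continuous fun z : ℝ => Complex.exp (2 * (Real.pi:ℂ) * Complex.I * (z:ℂ)) := by
      exact Complex.continuous_exp.comp (continuous_const.mul Complex.continuous_ofReal)
    exact this
  -- the bump-times-character functions
  set M : ℝ := 10 * (Q:ℝ) ^ 2 with hMdef
  set F : ℕ → ℕ → ℝ → ℂ :=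
    fun q a t => (η ((t - (a:ℝ)/q) * M) : ℂ) * e (-(l:ℝ) * t) with hF
  have hFc : ∀ q a : ℕ, Continuous (F q a) := by
    intro q a
    apply Continuous.mul
    · exact Complex.continuous_ofReal.comp
        (hηc.comp ((continuous_id.sub continuous_const).mul continuous_const))
    · exact he_cont.comp (continuous_const.mul continuous_id)
  have hFi : ∀ q a : ℕ, IntervalIntegrable (F q a) volume 0 1 :=
    fun q a => (hFc q a).intervalIntegrable 0 1
  -- value of each bump integral
  set Ihat : ℂ := ∫ y : ℝ, (η y : ℂ) * e (-((l:ℝ) / M) * y) with hIhat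
  have hbump : ∀ q ∈ A_Q, ∀ a ∈ Finset.Icc 1 (q - 1),
      ∫ t in (0:ℝ)..1, F q a t = ((M⁻¹ : ℝ) : ℂ) * (e (-(l:ℝ) * ((a:ℝ)/q)) * Ihat) := by
    intro q hq a ha
    have hq2' := hq2 q hq
    have hqle : (q:ℝ) ≤ 2 * Q := by exact_mod_cast (hA q hq).2.2
    have hq0' : (0:ℝ) < q := by
      have : 0 < q := by omega
      exact_mod_cast this
    rcases Finset.mem_Icc.mp ha with ⟨ha1, ha2⟩
    have ha1' : (1:ℝ) ≤ a := by exact_mod_cast ha1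
    have ha2' : (a:ℝ) ≤ (q:ℝ) - 1 := by
      have : (a:ℝ) ≤ ((q - 1 : ℕ) : ℝ) := by exact_mod_cast ha2
      rw [Nat.cast_sub (by omega)] at this
      simpa using this
    apply bump_integral η hηsupp M hM ((a:ℝ)/q)
    · rw [div_lt_div_iff₀ hM hq0']
      nlinarith
    · rw [div_add_div _ _ (ne_of_gt hq0') hM0, div_le_one (by positivity)]
      nlinarith
  -- the zero integral of the pure character
  have hzero : ∫ t in (0:ℝ)..1, e (-(l:ℝ) * t) = 0 := by
    have hlC : (l:ℂ) ≠ 0 := Int.cast_ne_zero.mpr hl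
    have hcne : (2 * (Real.pi:ℂ) * Complex.I * (-(l:ℂ))) ≠ 0 := by
      simp [Real.pi_ne_zero, Complex.I_ne_zero, hlC]
    have heq : Set.EqOn (fun t : ℝ => e (-(l:ℝ) * t))
        (fun t : ℝ => Complex.exp ((2 * (Real.pi:ℂ) * Complex.I * (-(l:ℂ))) * (t:ℂ)))
        (Set.uIcc (0:ℝ) 1) := by
      intro t _
      show Complex.exp _ = Complex.exp _
      congr 1
      push_cast
      ring
    rw [intervalIntegral.integral_congr heq, integral_exp_mul_complex hcne]
    have h1 : Complex.exp ((2 * (Real.pi:ℂ) * Complex.I * (-(l:ℂ))) * ((1:ℝ):ℂ)) = 1 := by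
      rw [show ((2 * (Real.pi:ℂ) * Complex.I * (-(l:ℂ))) * ((1:ℝ):ℂ))
          = ((-l : ℤ):ℂ) * (2 * (Real.pi:ℂ) * Complex.I) by push_cast; ring]
      exact Complex.exp_int_mul_two_pi_mul_I (-l)
    rw [h1]
    simp
  -- main formula
  set S : ℂ := ∑ q ∈ A_Q, if (q:ℤ) ∣ l then ((q:ℂ) - 1) else -1 with hS
  have key : (∫ t in (0:ℝ)..1,
        ((1:ℂ) - ((c_Q * ∑ q ∈ A_Q, ∑ a ∈ Finset.Icc 1 (q - 1),
          η ((t - (a:ℝ)/q) * M) : ℝ) : ℂ)) * e (-(l:ℝ) * t))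
      = -(((c_Q * M⁻¹ : ℝ)) : ℂ) * (Ihat * S) := by
    have hptwise : ∀ t : ℝ, ((1:ℂ) - ((c_Q * ∑ q ∈ A_Q, ∑ a ∈ Finset.Icc 1 (q - 1),
          η ((t - (a:ℝ)/q) * M) : ℝ) : ℂ)) * e (-(l:ℝ) * t)
        = e (-(l:ℝ) * t) - (c_Q:ℂ) * ∑ q ∈ A_Q, ∑ a ∈ Finset.Icc 1 (q - 1), F q a t := by
      intro t
      push_cast
      rw [sub_mul, one_mul, mul_assoc]
      congr 2
      simp only [Finset.sum_mul]
      rfl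
    have hint2 : IntervalIntegrable (fun t => (c_Q:ℂ) * ∑ q ∈ A_Q,
        ∑ a ∈ Finset.Icc 1 (q - 1), F q a t) volume 0 1 := by
      apply Continuous.intervalIntegrable
      apply continuous_const.mul
      apply continuous_finset_sum
      intro q _
      exact continuous_finset_sum _ (fun a _ => hFc q a)
    have hint1 : IntervalIntegrable (fun t : ℝ => e (-(l:ℝ) * t)) volume 0 1 := by
      exact (he_cont.comp (continuous_const.mul continuous_id)).intervalIntegrable 0 1
    rw [intervalIntegral.integral_congr (fun t _ => hptwise t),
      intervalIntegral.integral_sub hint1 hint2, hzero, zero_sub,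
      intervalIntegral.integral_const_mul]
    rw [intervalIntegral.integral_finset_sum
      (fun q _ => (continuous_finset_sum _ (fun a _ => hFc q a)).intervalIntegrable 0 1)]
    have hinner : ∀ q ∈ A_Q, (∫ t in (0:ℝ)..1, ∑ a ∈ Finset.Icc 1 (q - 1), F q a t)
        = ((M⁻¹:ℝ):ℂ) * Ihat * (if (q:ℤ) ∣ l then ((q:ℂ) - 1) else -1) := by
      intro q hq
      rw [intervalIntegral.integral_finset_sum (fun a _ => hFi q a)]
      rw [Finset.sum_congr rfl (hbump q hq)]
      rw [← gauss_sum q (hq2 q hq) l]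
      rw [Finset.mul_sum]
      apply Finset.sum_congr rfl
      intro a _
      ring
    rw [Finset.sum_congr rfl hinner, ← Finset.mul_sum]
    push_cast
    ring
  rw [key]
  -- estimate
  have habs : ‖-(((c_Q * M⁻¹ : ℝ)) : ℂ) * (Ihat * S)‖
      = (N_Q:ℝ)⁻¹ * (‖Ihat‖ * ‖S‖) := by
    rw [norm_mul, norm_neg, norm_mul, Complex.norm_real, Real.norm_eq_abs]
    congr 2
    rw [hc]
    rw [abs_of_nonneg (by positivity)]
    field_simp
  rw [habs]
  -- bound on Ihat
  have hIhat_bound := hηhat ((l:ℝ) / M)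
  have hIB : ‖Ihat‖ ≤ C₀ * (1 + |(l:ℝ)/M|) ^ (-(100:ℝ)) := hIhat_bound
  -- the divisor set
  set D : Finset ℕ := A_Q.filter (fun q => (q:ℤ) ∣ l) with hD
  have hSbound : ‖S‖ ≤ (∑ q ∈ D, ((q:ℝ) - 1)) + A_Q.card := by
    rw [hS, Finset.sum_ite]
    refine le_trans (norm_add_le _ _) ?_
    gcongr
    · refine le_trans (norm_sum_le _ _) ?_
      apply le_of_eq
      apply Finset.sum_congr rfl
      intro q hq
      have hq1 : (1:ℝ) ≤ q := by
        have := hq2 q (Finset.mem_filter.mp hq).1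
        exact_mod_cast by omega
      rw [show ((q:ℂ) - 1) = (((q:ℝ) - 1 : ℝ) : ℂ) by push_cast; ring,
        Complex.norm_real, Real.norm_eq_abs, abs_of_nonneg (by linarith)]
    · rw [Finset.sum_const, nsmul_eq_mul, mul_neg_one, norm_neg, Complex.norm_natCast]
      exact_mod_cast Finset.card_le_card (Finset.filter_subset _ _)
  have hcard_le : (A_Q.card : ℝ) ≤ 2 * Q := by
    have hsub : A_Q ⊆ Finset.Icc Q (2 * Q) := by
      intro q hq
      rw [Finset.mem_Icc]
      exact ⟨(hA q hq).2.1, (hA q hq).2.2⟩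
    have h1 : A_Q.card ≤ 2 * Q := by
      have := Finset.card_le_card hsub
      rw [Nat.card_Icc] at this
      omega
    exact_mod_cast h1
  have hQe : Real.log Q ≤ (Q:ℝ) ^ ε / ε := Real.log_le_rpow_div hQ0.le hε
  have hrpow_pos : (0:ℝ) < (Q:ℝ) ^ (ε - 1) := Real.rpow_pos_of_pos hQ0 _
  by_cases hlsmall : l.natAbs < Q ^ 3
  · -- small l: at most two prime divisors in A_Q
    have hD2 : D.card ≤ 2 := by
      by_contra hD3
      push_neg at hD3
      have hprod_dvd : (∏ q ∈ D, q) ∣ l.natAbs := by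
        apply Finset.prod_primes_dvd
        · intro q hq
          exact (hA q (Finset.mem_filter.mp hq).1).1.prime
        · intro q hq
          exact Int.natAbs_dvd_natAbs.mpr (Int.dvd_natAbs.mpr ((Finset.mem_filter.mp hq).2))
      have hprod_le : (∏ q ∈ D, q) ≤ l.natAbs :=
        Nat.le_of_dvd (Int.natAbs_pos.mpr hl) hprod_dvd
      have hpow_le : Q ^ D.card ≤ ∏ q ∈ D, q := by
        apply Finset.pow_card_le_prod
        intro q hq
        exact (hA q (Finset.mem_filter.mp hq).1).2.1
      have h3 : Q ^ 3 ≤ Q ^ D.card := Nat.pow_le_pow_right (by omega) (by omega)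
      omega
    have hDsum : (∑ q ∈ D, ((q:ℝ) - 1)) ≤ 4 * Q := by
      refine le_trans (Finset.sum_le_card_nsmul D _ (2 * (Q:ℝ)) ?_) ?_
      · intro q hq
        have : (q:ℝ) ≤ 2 * Q := by exact_mod_cast (hA q (Finset.mem_filter.mp hq).1).2.2
        linarith
      · rw [nsmul_eq_mul]
        have : (D.card : ℝ) ≤ 2 := by exact_mod_cast hD2
        nlinarith
    have hS6 : ‖S‖ ≤ 6 * Q := by
      refine le_trans hSbound ?_
      linarith
    have hI1 : ‖Ihat‖ ≤ C₀ := by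
      refine le_trans hIB ?_
      have : (1 + |(l:ℝ)/M|) ^ (-(100:ℝ)) ≤ 1 :=
        Real.rpow_le_one_of_one_le_of_nonpos (by linarith [abs_nonneg ((l:ℝ)/M)]) (by norm_num)
      nlinarith
    have hNlow : (Q:ℝ)^2 / (4 * Real.log Q) ≤ (N_Q:ℝ) := by
      have h1 : A_Q.card * (Q - 1) ≤ N_Q := by
        rw [hN]
        apply Finset.card_nsmul_le_sum
        intro q hq
        have := (hA q hq).2.1
        omega
      have h2 : ((A_Q.card * (Q - 1) : ℕ) : ℝ) ≤ (N_Q:ℝ) := by exact_mod_cast h1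
      rw [Nat.cast_mul, Nat.cast_sub (by omega)] at h2
      have h3 : (Q:ℝ)/(2 * Real.log Q) * ((Q:ℝ) - 1) ≤ (A_Q.card:ℝ) * ((Q:ℝ) - 1) := by
        apply mul_le_mul_of_nonneg_right hcard ?_
        linarith
      have h4 : (Q:ℝ)^2/(4 * Real.log Q) ≤ (Q:ℝ)/(2 * Real.log Q) * ((Q:ℝ) - 1) := by
        rw [div_mul_eq_mul_div, div_le_div_iff₀ (by positivity) (by positivity)]
        nlinarith [mul_nonneg (mul_nonneg (by linarith : (0:ℝ) ≤ 2 * (Q:ℝ))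
          (by linarith : (0:ℝ) ≤ (Q:ℝ) - 2)) hlog.le]
      push_cast at h2
      linarith
    have hinv : (N_Q:ℝ)⁻¹ ≤ 4 * Real.log Q / (Q:ℝ)^2 := by
      calc (N_Q:ℝ)⁻¹ ≤ ((Q:ℝ)^2/(4 * Real.log Q))⁻¹ :=
            inv_anti₀ (by positivity) hNlow
        _ = 4 * Real.log Q / (Q:ℝ)^2 := by rw [inv_div]
    calc (N_Q:ℝ)⁻¹ * (‖Ihat‖ * ‖S‖)
        ≤ (4 * Real.log Q / (Q:ℝ)^2) * (C₀ * (6 * Q)) := by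
          apply mul_le_mul hinv ?_ (mul_nonneg (norm_nonneg _) (norm_nonneg _))
            (div_nonneg (by linarith) (by positivity))
          exact mul_le_mul hI1 hS6 (norm_nonneg _) hC₀.le
      _ = 24 * C₀ * Real.log Q / Q := by field_simp; ring
      _ ≤ 24 * C₀ * ((Q:ℝ)^ε/ε) / Q := by gcongr
      _ = (24 * C₀ / ε) * (Q:ℝ)^(ε-1) := by
          rw [Real.rpow_sub hQ0, Real.rpow_one]
          field_simp
      _ ≤ (24 * C₀ / ε + 2 * C₀ * (10:ℝ) ^ (100:ℝ)) * (Q:ℝ)^(ε-1) := by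
          have h0 : (0:ℝ) ≤ 2 * C₀ * (10:ℝ) ^ (100:ℝ) * (Q:ℝ)^(ε-1) := by positivity
          nlinarith
  · -- large l
    have hcard_leN : (A_Q.card : ℝ) ≤ (N_Q:ℝ) := by
      have h1 : A_Q.card * (Q - 1) ≤ N_Q := by
        rw [hN]
        apply Finset.card_nsmul_le_sum
        intro q hq
        have := (hA q hq).2.1
        omega
      have h1' : A_Q.card ≤ N_Q := le_trans (Nat.le_mul_of_pos_right _ (by omega)) h1
      exact_mod_cast h1'
    have hNsum : (N_Q:ℝ) = ∑ q ∈ A_Q, ((q:ℝ) - 1) := by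
      rw [hN, Nat.cast_sum]
      apply Finset.sum_congr rfl
      intro q hq
      rw [Nat.cast_sub (by have := hq2 q hq; omega)]
      simp
    have hDsumN : (∑ q ∈ D, ((q:ℝ) - 1)) ≤ (N_Q:ℝ) := by
      rw [hNsum]
      apply Finset.sum_le_sum_of_subset_of_nonneg (Finset.filter_subset _ _)
      intro q hq _
      have h1 : (2:ℝ) ≤ q := by exact_mod_cast hq2 q hq
      linarith
    have hS2N : ‖S‖ ≤ 2 * (N_Q:ℝ) := le_trans hSbound (by linarith)
    have hzQ : (Q:ℝ)/10 ≤ |(l:ℝ)/M| := by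
      rw [abs_div, abs_of_pos hM]
      rw [div_le_div_iff₀ (by norm_num) hM]
      have h1 : ((Q:ℝ))^3 ≤ |(l:ℝ)| := by
        have h2 : (Q^3 : ℕ) ≤ l.natAbs := le_of_not_gt hlsmall
        calc ((Q:ℝ))^3 = ((Q^3:ℕ):ℝ) := by push_cast; ring
          _ ≤ (l.natAbs : ℝ) := by exact_mod_cast h2
          _ = |(l:ℝ)| := by
              rw [Nat.cast_natAbs]
              norm_cast
      nlinarith
    have hIB2 : ‖Ihat‖ ≤ C₀ * ((Q:ℝ)/10) ^ (-(100:ℝ)) := by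
      refine le_trans hIB ?_
      have h1 : (1 + |(l:ℝ)/M|) ^ (-(100:ℝ)) ≤ ((Q:ℝ)/10) ^ (-(100:ℝ)) := by
        apply Real.rpow_le_rpow_of_nonpos (by positivity) (by linarith [abs_nonneg ((l:ℝ)/M)])
        norm_num
      exact mul_le_mul_of_nonneg_left h1 hC₀.le
    calc (N_Q:ℝ)⁻¹ * (‖Ihat‖ * ‖S‖)
        ≤ (N_Q:ℝ)⁻¹ * ((C₀ * ((Q:ℝ)/10) ^ (-(100:ℝ))) * (2 * (N_Q:ℝ))) := by
          gcongr
      _ = 2 * C₀ * ((Q:ℝ)/10) ^ (-(100:ℝ)) := by field_simp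
      _ = 2 * C₀ * (10:ℝ) ^ (100:ℝ) * (Q:ℝ) ^ (-(100:ℝ)) := by
          rw [Real.div_rpow hQ0.le (by norm_num), Real.rpow_neg (by norm_num : (0:ℝ) ≤ 10)]
          field_simp
      _ ≤ 2 * C₀ * (10:ℝ) ^ (100:ℝ) * (Q:ℝ) ^ (ε - 1) := by
          apply mul_le_mul_of_nonneg_left
            (Real.rpow_le_rpow_of_exponent_le hQ1 (by linarith)) (by positivity)
      _ ≤ (24 * C₀ / ε + 2 * C₀ * (10:ℝ) ^ (100:ℝ)) * (Q:ℝ)^(ε-1) := by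
          have h0 : (0:ℝ) ≤ 24 * C₀ / ε * (Q:ℝ)^(ε-1) := by positivity
          nlinarith
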